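/- arXiv:1301.3803 — 2 statements merged into one kernel-verified Lean document; each statement's English description precedes it below -/
import Mathlib

section
/- In any 2-crossed module (L →δ E →∂ G, ▷, {,}), for all x, y, z ∈ E: {x,y}·((∂(x) ▷ y) ▷' {x,z})·{∂(x) ▷ y, ∂(x) ▷ z} = (x ▷' {y,z})·{x, ∂(y) ▷ z}·((∂(x y) ▷ z) ▷' {x,y}), where e ▷' l := l·{δ(l)⁻¹, e} for e ∈ E, l ∈ L. -/
/-- A 2-crossed module `(L →δ E →∂ G, ▷, {,})`: groups `L`, `E`, `G`,
homomorphisms `dl = δ : L → E` and `pd = ∂ : E → G` with `∂ ∘ δ` trivial,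
left actions `▷` of `G` by automorphisms on `L` (`actL`) and on `E` (`actE`)
making `δ` and `∂` equivariant, and a `G`-equivariant Peiffer lifting
`pl = {,} : E × E → L` satisfying the usual axioms. -/
structure TwoCrossedModule (L E G : Type*) [Group L] [Group E] [Group G] where
  /-- `δ : L → E` -/
  dl : L →* E
  /-- `∂ : E → G` -/
  pd : E →* G
  /-- the action of `G` on `L` -/
  actL : G → L → L
  /-- the action of `G` on `E` -/
  actE : G → E → E
  /-- the Peiffer lifting `{,} : E × E → L` -/
  pl : E → E → L
  pd_dl : ∀ l, pd (dl l) = 1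
  actL_one : ∀ l, actL 1 l = l
  actL_mul : ∀ g h l, actL (g * h) l = actL g (actL h l)
  actL_hom : ∀ g l k, actL g (l * k) = actL g l * actL g k
  actE_one : ∀ e, actE 1 e = e
  actE_mul : ∀ g h e, actE (g * h) e = actE g (actE h e)
  actE_hom : ∀ g e f, actE g (e * f) = actE g e * actE g f
  dl_equiv : ∀ g l, dl (actL g l) = actE g (dl l)
  pd_equiv : ∀ g e, pd (actE g e) = g * pd e * g⁻¹
  pl_equiv : ∀ g e f, actL g (pl e f) = pl (actE g e) (actE g f)
  dl_pl : ∀ e f, dl (pl e f) = e * f * e⁻¹ * actE (pd e) f⁻¹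
  pl_dl_dl : ∀ l k, pl (dl l) (dl k) = l * k * l⁻¹ * k⁻¹
  pl_dl_cancel : ∀ l e, pl (dl l) e * pl e (dl l) = l * actL (pd e) l⁻¹
  pl_mul_left : ∀ e f g, pl (e * f) g = pl e (f * g * f⁻¹) * actL (pd e) (pl f g)
  pl_mul_right : ∀ e f g,
    pl e (f * g) = pl e f * (pl e g * pl ((dl (pl e g))⁻¹) (actE (pd e) f))

namespace TwoCrossedModule

variable {L E G : Type*} [Group L] [Group E] [Group G]

/-- The operation `e ▷' l := l·{δ(l)⁻¹, e}`, a left action of `E` on `L`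
by automorphisms, making `(δ : L → E, ▷')` a crossed module. -/
def trp (T : TwoCrossedModule L E G) (e : E) (l : L) : L :=
  l * T.pl ((T.dl l)⁻¹) e

end TwoCrossedModule

namespace TwoCrossedModule

variable {L E G : Type*} [Group L] [Group E] [Group G] (T : TwoCrossedModule L E G)

lemma actL_one_r (g : G) : T.actL g 1 = 1 := by
  have h := T.actL_hom g 1 1
  rw [one_mul] at h
  exact mul_left_cancel (a := T.actL g 1) (by rw [mul_one, ← h])

lemma actL_inv (g : G) (l : L) : T.actL g l⁻¹ = (T.actL g l)⁻¹ := by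
  have h : T.actL g l⁻¹ * T.actL g l = 1 := by
    rw [← T.actL_hom, inv_mul_cancel, T.actL_one_r]
  exact eq_inv_of_mul_eq_one_left h

lemma actE_one_r (g : G) : T.actE g 1 = 1 := by
  have h := T.actE_hom g 1 1
  rw [one_mul] at h
  exact mul_left_cancel (a := T.actE g 1) (by rw [mul_one, ← h])

lemma actE_inv (g : G) (e : E) : T.actE g e⁻¹ = (T.actE g e)⁻¹ := by
  have h : T.actE g e⁻¹ * T.actE g e = 1 := by
    rw [← T.actE_hom, inv_mul_cancel, T.actE_one_r]
  exact eq_inv_of_mul_eq_one_left h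

lemma pl_one_left (e : E) : T.pl 1 e = 1 := by
  have h := T.pl_mul_left 1 1 e
  rw [one_mul, one_mul, inv_one, mul_one, map_one, T.actL_one] at h
  exact mul_left_cancel (a := T.pl 1 e) (by rw [mul_one, ← h])

lemma pl_dl_one (l : L) : T.pl (T.dl l) 1 = 1 := by
  have h := T.pl_dl_cancel l 1
  rw [T.pl_one_left, mul_one, map_one, T.actL_one, mul_inv_cancel] at h
  exact h

lemma pl_one_right (e : E) : T.pl e 1 = 1 := by
  have h := T.pl_mul_right e 1 1
  rw [one_mul, T.actE_one_r, ← map_inv, T.pl_dl_one, mul_one] at h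
  exact mul_left_cancel (a := T.pl e 1) (by rw [mul_one, ← h])

lemma trp_dl (k : L) (m : L) : T.trp (T.dl k) m = k * m * k⁻¹ := by
  rw [trp, ← map_inv, T.pl_dl_dl]
  group

/-- key lemma: `{x, δl}·(∂x ▷ l) = x ▷' l`. -/
lemma pl_dl_right (x : E) (l : L) :
    T.pl x (T.dl l) * T.actL (T.pd x) l = T.trp x l := by
  set m := T.actL (T.pd x) l with hm
  set b := T.pl x (T.dl l⁻¹) with hb
  -- first: 1 = pl x (dl l) * m * b * m⁻¹
  have h1 := T.pl_mul_right x (T.dl l) (T.dl l⁻¹)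
  rw [map_inv, mul_inv_cancel, T.pl_one_right, ← map_inv] at h1
  rw [show T.actE (T.pd x) (T.dl l) = T.dl m by rw [hm, T.dl_equiv]] at h1
  rw [← map_inv T.dl, T.pl_dl_dl, ← hb] at h1
  have hb' : b = m⁻¹ * (T.pl x (T.dl l))⁻¹ * m := by
    have : (1 : L) = T.pl x (T.dl l) * m * b * m⁻¹ := by
      rw [h1]; group
    have h2 : m = T.pl x (T.dl l) * m * b := by
      calc m = (1 : L) * m := by rw [one_mul]
        _ = T.pl x (T.dl l) * m * b * m⁻¹ * m := by rw [← this]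
        _ = T.pl x (T.dl l) * m * b := by group
    have h3 := eq_inv_mul_of_mul_eq h2.symm
    rw [h3]; group
  have h2 := T.pl_dl_cancel l⁻¹ x
  rw [inv_inv, ← hm, ← hb] at h2
  have h3 : T.pl (T.dl l⁻¹) x = l⁻¹ * m * b⁻¹ := by
    calc T.pl (T.dl l⁻¹) x = T.pl (T.dl l⁻¹) x * b * b⁻¹ := by group
      _ = l⁻¹ * m * b⁻¹ := by rw [h2]
  rw [trp, ← map_inv, h3, hb']
  group

end TwoCrossedModule

/-- In any 2-crossed module, for all `x, y, z ∈ E`: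
`{x,y}·((∂(x) ▷ y) ▷' {x,z})·{∂(x) ▷ y, ∂(x) ▷ z}
  = (x ▷' {y,z})·{x, ∂(y) ▷ z}·((∂(x y) ▷ z) ▷' {x,y})`. -/
theorem two_crossed_module_r3 {L E G : Type*} [Group L] [Group E] [Group G]
    (T : TwoCrossedModule L E G) (x y z : E) :
    T.pl x y * T.trp (T.actE (T.pd x) y) (T.pl x z) *
        T.pl (T.actE (T.pd x) y) (T.actE (T.pd x) z) =
      T.trp x (T.pl y z) * T.pl x (T.actE (T.pd y) z) *
        T.trp (T.actE (T.pd (x * y)) z) (T.pl x y) := by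
  set l := T.pl y z with hl
  set m := T.actL (T.pd x) l with hm
  set w := T.actE (T.pd y) z * y with hw
  -- LHS = pl x (y*z) * m
  have hLHS : T.pl x y * T.trp (T.actE (T.pd x) y) (T.pl x z) *
      T.pl (T.actE (T.pd x) y) (T.actE (T.pd x) z) = T.pl x (y * z) * m := by
    rw [TwoCrossedModule.trp, T.pl_mul_right x y z, hm, hl, T.pl_equiv]
  -- decomposition y*z = dl l * w
  have hdec : y * z = T.dl l * w := by
    rw [hl, T.dl_pl, hw, T.actE_inv]
    group
  -- pl x (dl l * w) = pl x (dl l) * m * pl x w * m⁻¹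
  have hstep : T.pl x (T.dl l * w) = T.pl x (T.dl l) * m * T.pl x w * m⁻¹ := by
    rw [T.pl_mul_right x (T.dl l) w,
      show T.actE (T.pd x) (T.dl l) = T.dl m by rw [hm, T.dl_equiv],
      ← map_inv T.dl, T.pl_dl_dl]
    group
  have hmid : T.pl x (y * z) * m = T.trp x l * T.pl x w := by
    rw [hdec, hstep, ← T.pl_dl_right x l, ← hm]
    group
  -- pl x w = pl x (∂y▷z) * trp (∂(xy)▷z) (pl x y)
  have hw2 : T.pl x w =
      T.pl x (T.actE (T.pd y) z) * T.trp (T.actE (T.pd (x * y)) z) (T.pl x y) := by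
    rw [hw, T.pl_mul_right x (T.actE (T.pd y) z) y, TwoCrossedModule.trp,
      show T.actE (T.pd (x * y)) z = T.actE (T.pd x) (T.actE (T.pd y) z) by
        rw [map_mul, T.actE_mul]]
  rw [hLHS, hmid, hw2]
  group
end

section
/- In any braided crossed module (δ: E → G, {,}), for all a, b ∈ G and k ∈ E: {a·δ(k), b·δ(k)} = (a ▷' k)·{a,b}·(b ▷' k⁻¹) = {a,b}·((b a b⁻¹) ▷' k)·(b ▷' k⁻¹), where g ▷' e := e·{δ(e)⁻¹, g} for g ∈ G, e ∈ E. -/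
/-- A braided crossed module `(δ : E → G, {,})` (a 2-crossed module with
trivial bottom group): groups `E` and `G`, a homomorphism `dl = δ : E → G`,
and a Peiffer lifting `pl = {,} : G × G → E` satisfying
`δ({g,h}) = g h g⁻¹ h⁻¹`; `{δ(e), δ(f)} = e f e⁻¹ f⁻¹`;
`{δ(e), g}·{g, δ(e)} = 1`; `{g h, k} = {g, h k h⁻¹}·{h, k}`;
`{g, h k} = {g, h}·(h ▷' {g, k})`, where `g ▷' e := e·{δ(e)⁻¹, g}`. -/
structure BraidedCrossedModule (E G : Type*) [Group E] [Group G] where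
  /-- `δ : E → G` -/
  dl : E →* G
  /-- the Peiffer lifting `{,} : G × G → E` -/
  pl : G → G → E
  dl_pl : ∀ g h, dl (pl g h) = g * h * g⁻¹ * h⁻¹
  pl_dl : ∀ e f, pl (dl e) (dl f) = e * f * e⁻¹ * f⁻¹
  pl_dl_cancel : ∀ e g, pl (dl e) g * pl g (dl e) = 1
  pl_mul_left : ∀ g h k, pl (g * h) k = pl g (h * k * h⁻¹) * pl h k
  pl_mul_right : ∀ g h k,
    pl g (h * k) = pl g h * (pl g k * pl ((dl (pl g k))⁻¹) h)

namespace BraidedCrossedModule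

variable {E G : Type*} [Group E] [Group G]

/-- The operation `g ▷' e := e·{δ(e)⁻¹, g}`, a left action of `G` on `E`
by automorphisms, making `(δ : E → G, ▷')` a crossed module. -/
def trp (T : BraidedCrossedModule E G) (g : G) (e : E) : E :=
  e * T.pl ((T.dl e)⁻¹) g

end BraidedCrossedModule

namespace BraidedCrossedModule

variable {E G : Type*} [Group E] [Group G] (T : BraidedCrossedModule E G)

lemma pl_one_left' (h : G) : T.pl 1 h = 1 := by
  have h1 := T.pl_mul_left 1 1 h
  simp only [one_mul, mul_one, inv_one] at h1
  exact left_eq_mul.mp h1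

lemma pl_dl_self' (k : E) : T.pl (T.dl k) (T.dl k) = 1 := by
  rw [T.pl_dl]; group

lemma pl_absorb' (k : E) (a : G) :
    T.pl (T.dl k) (a * T.dl k) = T.pl (T.dl k) a := by
  rw [T.pl_mul_right, pl_dl_self', map_one, inv_one, pl_one_left', mul_one, mul_one]

lemma pl_inv_conj' (k : E) (x : G) :
    T.pl (T.dl k)⁻¹ (T.dl k * x * (T.dl k)⁻¹) = (T.pl (T.dl k) x)⁻¹ := by
  have h := T.pl_mul_left (T.dl k)⁻¹ (T.dl k) x
  rw [inv_mul_cancel, pl_one_left'] at h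
  exact eq_inv_of_mul_eq_one_left h.symm

lemma pl_conj' (k : E) (x : G) :
    T.pl (T.dl k) ((T.dl k)⁻¹ * (x * T.dl k)) = k⁻¹ * T.pl (T.dl k) x * k := by
  rw [T.pl_mul_right, pl_absorb']
  have h0 : T.pl (T.dl k) (T.dl k)⁻¹ = 1 := by
    rw [← map_inv, T.pl_dl]; group
  have h1 : T.pl (T.dl (T.pl (T.dl k) x))⁻¹ (T.dl k)⁻¹
      = (T.pl (T.dl k) x)⁻¹ * k⁻¹ * T.pl (T.dl k) x * k := by
    rw [← map_inv, ← map_inv, T.pl_dl]; group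
  rw [h0, h1]; group

lemma pl_inv_left' (k : E) (x : G) :
    T.pl (T.dl k)⁻¹ x = k⁻¹ * (T.pl (T.dl k) x)⁻¹ * k := by
  have h := pl_inv_conj' T k ((T.dl k)⁻¹ * (x * T.dl k))
  have e1 : T.dl k * ((T.dl k)⁻¹ * (x * T.dl k)) * (T.dl k)⁻¹ = x := by group
  rw [e1, pl_conj'] at h
  rw [h]; group

lemma trp_eq' (x : G) (k : E) : T.trp x k = (T.pl (T.dl k) x)⁻¹ * k := by
  simp only [trp]
  rw [pl_inv_left']; group

lemma trp_dl_mul' (f : E) (g : G) (e : E) :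
    T.trp (T.dl f * g) e = f * T.trp g e * f⁻¹ := by
  simp only [trp]
  rw [T.pl_mul_right]
  have h1 : T.pl (T.dl e)⁻¹ (T.dl f) = e⁻¹ * f * e * f⁻¹ := by
    rw [← map_inv, T.pl_dl]; group
  have h2 : T.pl (T.dl (T.pl (T.dl e)⁻¹ g))⁻¹ (T.dl f)
      = (T.pl (T.dl e)⁻¹ g)⁻¹ * f * T.pl (T.dl e)⁻¹ g * f⁻¹ := by
    rw [← map_inv, T.pl_dl]; group
  rw [h1, h2]; group

end BraidedCrossedModule

open BraidedCrossedModule in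
/-- In any braided crossed module, for all `a, b ∈ G` and `k ∈ E`:
`{a·δ(k), b·δ(k)} = (a ▷' k)·{a,b}·(b ▷' k⁻¹)
                  = {a,b}·((b a b⁻¹) ▷' k)·(b ▷' k⁻¹)`. -/
theorem braided_crossed_module_shift {E G : Type*} [Group E] [Group G]
    (T : BraidedCrossedModule E G) (a b : G) (k : E) :
    T.pl (a * T.dl k) (b * T.dl k) =
      T.trp a k * T.pl a b * T.trp b k⁻¹ ∧
    T.pl (a * T.dl k) (b * T.dl k) =
      T.pl a b * T.trp (b * a * b⁻¹) k * T.trp b k⁻¹ := by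
  have cancel : ∀ (x : G) (e : E), T.pl x (T.dl e) = (T.pl (T.dl e) x)⁻¹ :=
    fun x e => eq_inv_of_mul_eq_one_right (T.pl_dl_cancel e x)
  have hL : T.pl (a * T.dl k) (b * T.dl k)
      = (T.pl (T.dl k) a)⁻¹ * (k * T.pl a b * k⁻¹) * T.pl (T.dl k) b := by
    rw [T.pl_mul_left, pl_absorb']
    have e1 : T.dl k * (b * T.dl k) * (T.dl k)⁻¹ = T.dl k * b := by group
    rw [e1, T.pl_mul_right, cancel a k]
    have h2 : T.pl (T.dl (T.pl a b))⁻¹ (T.dl k)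
        = (T.pl a b)⁻¹ * k * T.pl a b * k⁻¹ := by
      rw [← map_inv, T.pl_dl]; group
    rw [h2]; group
  have hR1 : T.trp a k * T.pl a b * T.trp b k⁻¹
      = (T.pl (T.dl k) a)⁻¹ * (k * T.pl a b * k⁻¹) * T.pl (T.dl k) b := by
    rw [trp_eq', trp_eq', map_inv, pl_inv_left']
    group
  refine ⟨by rw [hL, ← hR1], ?_⟩
  rw [hL, ← hR1]
  have hb : b * a * b⁻¹ = T.dl (T.pl a b)⁻¹ * a := by
    rw [map_inv, T.dl_pl]; group
  rw [hb, trp_dl_mul']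
  group
end
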